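/- arXiv:1501.02496 — 3 statements merged into one kernel-verified Lean document; each statement's English description precedes it below -/
import Mathlib

section
/- Let G be a finite simple graph containing a strongly disjoint set of bouquets B = {B_1, ..., B_q} with union of vertex sets equal to V(G), where for each p the chosen edge s_p ∈ E(B_p) is such that {s_1, ..., s_q} is an induced matching in G. Then listing the edges of E(B_1) ∪ ... ∪ E(B_q) \ {s_1, ..., s_q} in any fixed order followed by s_1, ..., s_q gives a well ordered edge cover of G. -/
/-!
Each bouquet edge `{r p, z}` is the only bouquet edge containing its leaf `z`, so the bouquet
edges form a minimal cover of `V`. An edge `H` missing from the list is not one of the chosen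
edges, so by the induced matching property it has an endpoint `v` on no chosen edge. Then `v` is
a non-chosen leaf of some bouquet `p`, and the listed edge `{r p, v}` lies in `H ∪ s p`, where
`s p` comes later in the list.
-/

open Classical

variable {α : Type*} [DecidableEq α]

def vertexSet (Δ : Finset (Finset α)) : Finset α := Δ.sup id

def IsFacetCover (V : Finset α) (Δ D : Finset (Finset α)) : Prop :=
  D ⊆ Δ ∧ ∀ v ∈ V, ∃ F ∈ D, v ∈ F

def IsMinimalFacetCover (V : Finset α) (Δ D : Finset (Finset α)) : Prop :=
  IsFacetCover V Δ D ∧ ∀ D' ⊂ D, ¬IsFacetCover V Δ D'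

def listUnion (L : List (Finset α)) : Finset α := L.foldr (· ∪ ·) ∅

/-- A sequence of facets `L = [F_1, ..., F_k]` is a well ordered facet cover of the complex
with facet set `Δ` and vertex set `V`: it is a minimal facet cover and for every facet
`H ∉ {F_1, ..., F_k}` there is `i ≤ k - 1` with `F_i ⊆ H ∪ F_{i+1} ∪ ⋯ ∪ F_k`. -/
def IsWellOrderedFacetCover (V : Finset α) (Δ : Finset (Finset α))
    (L : List (Finset α)) : Prop :=
  L.Nodup ∧ (∀ F ∈ L, F ∈ Δ) ∧ IsMinimalFacetCover V Δ L.toFinset ∧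
    ∀ H ∈ Δ, H ∉ L → ∃ i : ℕ, ∃ h : i + 1 < L.length,
      L.get ⟨i, Nat.lt_of_succ_lt h⟩ ⊆ H ∪ listUnion (L.drop (i + 1))

lemma mem_listUnion {x : α} {l : List (Finset α)} :
    x ∈ listUnion l ↔ ∃ F ∈ l, x ∈ F := by
  induction l with
  | nil => simp [listUnion]
  | cons F l ih =>
    change x ∈ F ∪ listUnion l ↔ _
    simp [ih]

lemma listUnion_mono {l l' : List (Finset α)} (h : l ⊆ l') : listUnion l ⊆ listUnion l' := by
  intro x hx
  obtain ⟨F, hF, hxF⟩ := mem_listUnion.mp hx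
  exact mem_listUnion.mpr ⟨F, h hF, hxF⟩

lemma exists_get_subset_union_listUnion_drop {L₀ L₁ : List (Finset α)} {F H : Finset α}
    (hF : F ∈ L₀) (hL₁ : L₁ ≠ []) (hsub : F ⊆ H ∪ listUnion L₁) :
    ∃ i : ℕ, ∃ h : i + 1 < (L₀ ++ L₁).length,
      (L₀ ++ L₁).get ⟨i, Nat.lt_of_succ_lt h⟩ ⊆
        H ∪ listUnion ((L₀ ++ L₁).drop (i + 1)) := by
  obtain ⟨i, hi, rfl⟩ := List.getElem_of_mem hF
  have hlen : i + 1 < (L₀ ++ L₁).length := by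
    have := List.length_pos_iff.mpr hL₁
    simp only [List.length_append]; omega
  refine ⟨i, hlen, ?_⟩
  rw [List.get_eq_getElem, List.getElem_append_left hi, List.drop_append_of_le_length hi]
  exact hsub.trans <| Finset.union_subset_union_right <|
    listUnion_mono (List.subset_append_right _ _)

omit [DecidableEq α] in
lemma IsFacetCover.isMinimalFacetCover_of_private_vertex {V : Finset α}
    {Δ D : Finset (Finset α)} (hD : IsFacetCover V Δ D) 
    (hpriv : ∀ F ∈ D, ∃ v ∈ V, v ∈ F ∧ ∀ G ∈ D, v ∈ G → G = F) :
    IsMinimalFacetCover V Δ D := by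
  refine ⟨hD, fun D' hD' hcov => ?_⟩
  obtain ⟨F, hFD, hFD'⟩ := Finset.exists_of_ssubset hD'
  obtain ⟨v, hv, hvF, hpriv⟩ := hpriv F hFD
  obtain ⟨G, hGD', hvG⟩ := hcov.2 v hv
  exact hFD' (hpriv G (hD'.subset hGD') hvG ▸ hGD')

section Bouquets

variable {ι : Type*} {r : ι → α} {Z : ι → Finset α}

def bouquetVertices [Fintype ι] (r : ι → α) (Z : ι → Finset α) : Finset α :=
  Finset.univ.biUnion fun p => insert (r p) (Z p)

def bouquetEdges [Fintype ι] (r : ι → α) (Z : ι → Finset α) : Finset (Finset α) :=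
  Finset.univ.biUnion fun p => (Z p).image fun z => ({r p, z} : Finset α)

lemma mem_bouquetEdges [Fintype ι] {F : Finset α} :
    F ∈ bouquetEdges r Z ↔ ∃ p, ∃ z ∈ Z p, ({r p, z} : Finset α) = F := by
  simp [bouquetEdges]

lemma isFacetCover_bouquetEdges [Fintype ι] {E : Finset (Finset α)}
    (hne : ∀ p, (Z p).Nonempty) (hE : ∀ p, ∀ z ∈ Z p, ({r p, z} : Finset α) ∈ E) :
    IsFacetCover (bouquetVertices r Z) E (bouquetEdges r Z) := by
  refine ⟨fun F hF => ?_, fun v hv => ?_⟩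
  · obtain ⟨p, z, hz, rfl⟩ := mem_bouquetEdges.mp hF
    exact hE p z hz
  · obtain ⟨p, -, hv⟩ := Finset.mem_biUnion.mp hv
    rcases Finset.mem_insert.mp hv with rfl | hv
    · obtain ⟨z, hz⟩ := hne p
      exact ⟨{r p, z}, mem_bouquetEdges.mpr ⟨p, z, hz, rfl⟩, Finset.mem_insert_self _ _⟩
    · exact ⟨{r p, v}, mem_bouquetEdges.mpr ⟨p, v, hv, rfl⟩,
        Finset.mem_insert_of_mem (Finset.mem_singleton_self v)⟩

structure DisjointBouquets (r : ι → α) (Z : ι → Finset α) : Prop where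
  center_not_mem : ∀ p, r p ∉ Z p
  pairwise_disjoint : Pairwise fun p p' => Disjoint (insert (r p) (Z p)) (insert (r p') (Z p'))

namespace DisjointBouquets

variable (h : DisjointBouquets r Z) {p p' : ι} {z w : α}
include h

lemma leaf_ne_center (hz : z ∈ Z p) (p' : ι) : z ≠ r p' := by
  rintro rfl
  by_cases hpp : p = p'
  · exact h.center_not_mem p (hpp ▸ hz)
  · exact Finset.disjoint_left.mp (h.pairwise_disjoint hpp) (Finset.mem_insert_of_mem hz)
      (Finset.mem_insert_self _ _)

lemma mem_edge_iff (hz : z ∈ Z p) (hw : w ∈ Z p') :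
    z ∈ ({r p', w} : Finset α) ↔ p = p' ∧ z = w := by
  refine ⟨fun hzw => ?_, fun ⟨hpp, hzw⟩ => by simp [hzw]⟩
  have hzw : z = w := by simpa [h.leaf_ne_center hz p'] using hzw
  subst hzw
  refine ⟨by_contra fun hpp => ?_, rfl⟩
  exact Finset.disjoint_left.mp (h.pairwise_disjoint hpp) (Finset.mem_insert_of_mem hz)
    (Finset.mem_insert_of_mem hw)

lemma edge_inj (hz : z ∈ Z p) (hw : w ∈ Z p') :
    ({r p, z} : Finset α) = {r p', w} ↔ p = p' ∧ z = w := by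
  refine ⟨fun he => (h.mem_edge_iff hz hw).mp (he ▸ by simp), ?_⟩
  rintro ⟨rfl, rfl⟩
  rfl

lemma eq_edge_of_leaf_mem [Fintype ι] {F : Finset α} (hz : z ∈ Z p)
    (hF : F ∈ bouquetEdges r Z) (hzF : z ∈ F) : F = {r p, z} := by
  obtain ⟨p', w, hw, rfl⟩ := mem_bouquetEdges.mp hF
  obtain ⟨rfl, rfl⟩ := (h.mem_edge_iff hz hw).mp hzF
  rfl

lemma isMinimalFacetCover [Fintype ι] {E : Finset (Finset α)}
    (hne : ∀ p, (Z p).Nonempty) (hE : ∀ p, ∀ z ∈ Z p, ({r p, z} : Finset α) ∈ E) :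
    IsMinimalFacetCover (bouquetVertices r Z) E (bouquetEdges r Z) := by
  refine (isFacetCover_bouquetEdges hne hE).isMinimalFacetCover_of_private_vertex fun F hF => ?_
  obtain ⟨p, z, hz, rfl⟩ := mem_bouquetEdges.mp hF
  exact ⟨z, Finset.mem_biUnion.mpr ⟨p, Finset.mem_univ p, Finset.mem_insert_of_mem hz⟩,
    by simp, fun G hG hzG => h.eq_edge_of_leaf_mem hz hG hzG⟩

lemma edge_not_mem_chosen [Fintype ι] {z' : ι → α} (hz' : ∀ p, z' p ∈ Z p) (hz : z ∈ Z p)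
    (hzz' : z ≠ z' p) : ({r p, z} : Finset α) ∉ Finset.univ.image fun p => {r p, z' p} := by
  simp only [Finset.mem_image, Finset.mem_univ, true_and, not_exists]
  intro p' hp'
  obtain ⟨rfl, rfl⟩ := (h.edge_inj (hz' p') hz).mp hp'
  exact hzz' rfl

end DisjointBouquets

lemma exists_leaf_ne_of_not_mem_biUnion [Fintype ι] {z' : ι → α} {v : α}
    (hv : v ∈ bouquetVertices r Z)
    (hvs : v ∉ Finset.univ.biUnion fun p => ({r p, z' p} : Finset α)) :
    ∃ p, v ∈ Z p ∧ v ≠ z' p := by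
  obtain ⟨p, -, hv⟩ := Finset.mem_biUnion.mp hv
  simp only [Finset.mem_biUnion, Finset.mem_univ, true_and, Finset.mem_insert,
    Finset.mem_singleton, not_exists, not_or] at hvs
  exact ⟨p, (Finset.mem_insert.mp hv).resolve_left (hvs p).1, (hvs p).2⟩

end Bouquets

/-- Let a finite simple graph (vertex set `V`, edges the `2`-element sets in `E`) contain a
strongly disjoint set of bouquets (stars with centers `r p`, leaf sets `Z p`, chosen
leaves `z' p`, the chosen edges `s p = {r p, z' p}` forming an induced matching) whose
union of vertex sets is `V`.  Then listing the non-chosen edges of the bouquets in any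
fixed order, followed by `s 1, ..., s q`, gives a well ordered edge cover of the graph. -/
theorem strongly_disjoint_bouquets_give_wellOrderedEdgeCover (V : Finset α)
    (E : Finset (Finset α)) (hE : ∀ e ∈ E, e.card = 2 ∧ e ⊆ V)
    (q : ℕ) (r : Fin q → α) (Z : Fin q → Finset α) (z' : Fin q → α)
    (hB : ∀ p, (Z p).Nonempty ∧ r p ∉ Z p ∧ ∀ z ∈ Z p, ({r p, z} : Finset α) ∈ E)
    (hdisj : ∀ p p', p ≠ p' → Disjoint (insert (r p) (Z p)) (insert (r p') (Z p')))
    (hVeq : (Finset.univ.biUnion fun p => insert (r p) (Z p)) = V)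
    (hz' : ∀ p, z' p ∈ Z p)
    (hindmatch : ∀ h ∈ E, h ⊆ (Finset.univ.biUnion fun p => ({r p, z' p} : Finset α)) →
      ∃ p, h = ({r p, z' p} : Finset α))
    (L0 : List (Finset α)) (hL0nd : L0.Nodup)
    (hL0 : L0.toFinset =
      (Finset.univ.biUnion fun p => (Z p).image fun z => ({r p, z} : Finset α)) \
        Finset.univ.image (fun p => ({r p, z' p} : Finset α))) :
    IsWellOrderedFacetCover V E (L0 ++ List.ofFn fun p => ({r p, z' p} : Finset α)) := by
  set s : Fin q → Finset α := fun p => {r p, z' p}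
  have hbq : DisjointBouquets r Z := ⟨fun p => (hB p).2.1, hdisj⟩
  have hs_mem : ∀ p, s p ∈ List.ofFn s := fun p => List.mem_ofFn.mpr ⟨p, rfl⟩
  have hs_inj : s.Injective := fun p p' h => ((hbq.edge_inj (hz' p) (hz' p')).mp h).1
  have hL0_sdiff : L0.toFinset = bouquetEdges r Z \ (List.ofFn s).toFinset := by
    rw [hL0, Fin.univ_image_def]; rfl
  have htoFinset : (L0 ++ List.ofFn s).toFinset = bouquetEdges r Z := by
    rw [List.toFinset_append, hL0_sdiff, Finset.sdiff_union_of_subset]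
    simpa [Finset.subset_iff, List.mem_ofFn] using
      fun p => mem_bouquetEdges.mpr ⟨p, z' p, hz' p, rfl⟩
  have hmin := hbq.isMinimalFacetCover (fun p => (hB p).1) (fun p => (hB p).2.2)
  rw [bouquetVertices, hVeq, ← htoFinset] at hmin
  refine ⟨hL0nd.append (List.nodup_ofFn.mpr hs_inj) ?_,
    fun F hF => hmin.1.1 (List.mem_toFinset.mpr hF), hmin, ?_⟩
  · intro F hF hF'
    rw [← List.mem_toFinset, hL0_sdiff, Finset.mem_sdiff, List.mem_toFinset] at hF
    exact hF.2 hF'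
  intro H hHE hHL
  obtain ⟨v, hvH, hv⟩ := Finset.not_subset.mp fun hsub => by
    obtain ⟨p, rfl⟩ := hindmatch H hHE hsub
    exact hHL (List.mem_append_right _ (hs_mem p))
  obtain ⟨p, hvZ, hvz'⟩ :=
    exists_leaf_ne_of_not_mem_biUnion (by rw [bouquetVertices, hVeq]; exact (hE H hHE).2 hvH) hv
  have he : ({r p, v} : Finset α) ∈ L0 := by
    rw [← List.mem_toFinset, hL0, Finset.mem_sdiff]
    exact ⟨mem_bouquetEdges.mpr ⟨p, v, hvZ, rfl⟩, hbq.edge_not_mem_chosen hz' hvZ hvz'⟩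
  refine exists_get_subset_union_listUnion_drop he (List.ne_nil_of_mem (hs_mem p)) ?_
  rw [Finset.insert_subset_iff, Finset.singleton_subset_iff]
  exact ⟨Finset.mem_union_right _ (mem_listUnion.mpr ⟨s p, hs_mem p, by simp [s]⟩),
    Finset.mem_union_left _ hvH⟩
end

section
/- Let Γ be a simplicial complex on vertex set {x_1, ..., x_n}, let m be a squarefree monomial, and suppose the induced subcollection Γ_m (facets of Γ whose vertices all divide m) has a well ordered facet cover of cardinality i. Then the multigraded Betti number b_{i,m}(S/F(Γ)) of the quotient by the facet ideal F(Γ) is nonzero. -/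
open Classical

variable {α : Type*} [DecidableEq α]

/-- The induced subcollection of `Γ` on a vertex subset `A`: the facets contained in `A`. -/
def inducedSub (Γ : Finset (Finset α)) (A : Finset α) : Finset (Finset α) :=
  Γ.filter (· ⊆ A)

/-- Chains of the (augmented) Taylor subcomplex determined by the predicate `P` on
subsets of the `s` generators: the free `k`-module on faces of cardinality `j`
(the empty face corresponds to `j = 0`). -/
noncomputable abbrev TaylorChain (k : Type) [Field k] (s : ℕ) (P : Finset (Fin s) → Prop)
    (j : ℕ) : Type :=
  {σ : Finset (Fin s) // P σ ∧ σ.card = j} → k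

/-- The simplicial boundary map from chains on faces of cardinality `j + 1` to chains on
faces of cardinality `j`, with the usual signs. -/
noncomputable def taylorBd (k : Type) [Field k] (s : ℕ) (P : Finset (Fin s) → Prop) (j : ℕ) :
    TaylorChain k s P (j + 1) →ₗ[k] TaylorChain k s P j where
  toFun f τ := ∑ v : Fin s,
    if h : v ∉ τ.1 ∧ P (insert v τ.1) then
      (-1 : k) ^ (τ.1.filter (· < v)).card *
        f ⟨insert v τ.1, h.2, by rw [Finset.card_insert_of_notMem h.1, τ.2.2]⟩
    else 0
  map_add' f g := by
    funext τ
    simp only [Pi.add_apply]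
    rw [← Finset.sum_add_distrib]
    refine Finset.sum_congr rfl fun v _ => ?_
    split
    · simp [mul_add]
    · simp
  map_smul' c f := by
    funext τ
    simp only [Pi.smul_apply, smul_eq_mul, RingHom.id_apply]
    rw [Finset.mul_sum]
    refine Finset.sum_congr rfl fun v _ => ?_
    split
    · ring
    · simp

/-- The multigraded Betti number `b_{i,m}(S/I)` of the quotient by a monomial ideal `I`
with `s` generators, computed via the Bayer–Peeva–Sturmfels formula: for `i ≥ 1` it is the
dimension of the `(i - 2)`nd reduced simplicial homology of the subcomplex of the Taylor
complex consisting of the faces whose lcm strictly divides `m`; that subcomplex is recorded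
by the predicate `P` (with faces indexed by their cardinality, the empty face included), so
that `b_{i,m}(S/I) = dim ker ∂_{i-1} - dim im ∂_i`. -/
noncomputable def bettiOfTaylor (k : Type) [Field k] (s : ℕ)
    (P : Finset (Fin s) → Prop) : ℕ → ℕ
  | 0 => if P ∅ then 0 else 1
  | 1 => Module.finrank k (TaylorChain k s P 0) -
      Module.finrank k (LinearMap.range (taylorBd k s P 0))
  | (i + 2) => Module.finrank k (LinearMap.ker (taylorBd k s P i)) -
      Module.finrank k (LinearMap.range (taylorBd k s P (i + 1)))

/-- The multigraded Betti number `b_{i,m}(S/F(Γ))` for the facet ideal `F(Γ)` of the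
simplicial complex with facet set `Γ`, in the squarefree multidegree `m`: the generators of
`F(Γ)` are the facets of `Γ`, the lcm of a set of facets is their union, and a monomial
divides `m` strictly iff its support is properly contained in `m`.  By the
Bayer–Peeva–Sturmfels formula the Betti number vanishes unless `m` is an lcm of generators,
and otherwise equals the dimension of the corresponding reduced homology of the restricted
Taylor complex. -/
noncomputable def facetBetti (k : Type) [Field k] (Γ : Finset (Finset α)) (i : ℕ)
    (m : Finset α) : ℕ :=
  if ∃ σ : Finset (Fin Γ.card),
      (σ.sup fun v => ((Γ.equivFin.symm v : { x // x ∈ Γ }) : Finset α)) = m then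
    bettiOfTaylor k Γ.card
      (fun σ => (σ.sup fun v => ((Γ.equivFin.symm v : { x // x ∈ Γ }) : Finset α)) ⊂ m) i
  else 0

/-!
Let `σ` be the set of generators given by the facets `F_1, …, F_k` of the cover. By minimality
every proper subset of `σ` has lcm properly dividing `m`, so the boundary of the simplex `σ` is a
cycle `z` of the Taylor subcomplex of faces whose lcm properly divides `m`. To see that `z` is not
a boundary, give each facet `H ⊆ m` a level `ℓ H` with `F_{ℓ H} ⊆ H ∪ F_{ℓ H + 1} ∪ ⋯ ∪ F_k`
(the facet `F_i` itself gets level `i`), and let `φ` send a face to the determinant of the 0/1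
matrix recording the levels of its elements. By cofactor expansion, the coboundary of `φ` at a
face is the same determinant with a row of ones on top. It is `±1` at `σ`, whose levels are
`1, …, k`. It vanishes on the subcomplex: a face with pairwise distinct levels would, by descending
induction along the well ordering, cover all of `m`. Hence `φ(z) = ±1` while `φ` kills boundaries.
-/

namespace Finset

variable {β : Type*} [LinearOrder β]

lemma card_filter_lt_insert (σ : Finset β) {v : β} (w : β) (hv : v ∉ σ) :
    ((insert v σ).filter (· < w)).card = (σ.filter (· < w)).card + if v < w then 1 else 0 := by
  rw [filter_insert]
  split
  · rw [card_insert_of_notMem fun h => hv (mem_of_mem_filter _ h)]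
  · rw [add_zero]

lemma neg_one_pow_card_filter_lt_insert_swap {R : Type*} [CommRing R] (σ : Finset β) {v w : β}
    (hv : v ∉ σ) (hw : w ∉ σ) (hvw : v ≠ w) :
    (-1 : R) ^ (σ.filter (· < v)).card * (-1) ^ ((insert v σ).filter (· < w)).card
      = -((-1) ^ (σ.filter (· < w)).card * (-1) ^ ((insert w σ).filter (· < v)).card) := by
  rw [card_filter_lt_insert σ w hv, card_filter_lt_insert σ v hw]
  rcases hvw.lt_or_gt with h | h
  · simp [h, asymm h, pow_succ, mul_comm]
  · simp [h, asymm h, pow_succ, mul_comm]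

lemma card_filter_lt_orderEmbOfFin (t : Finset β) {n : ℕ} (ht : t.card = n) (c : Fin n) :
    (t.filter (· < t.orderEmbOfFin ht c)).card = c := by
  have h : t.filter (· < t.orderEmbOfFin ht c)
      = (Iio c).map (t.orderEmbOfFin ht).toEmbedding := by
    ext x
    simp only [mem_filter, mem_map, mem_Iio, RelEmbedding.coe_toEmbedding]
    constructor
    · rintro ⟨hx, hlt⟩
      obtain ⟨d, rfl⟩ : x ∈ Set.range (t.orderEmbOfFin ht) := by simpa using hx
      exact ⟨d, (t.orderEmbOfFin ht).lt_iff_lt.mp hlt, rfl⟩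
    · rintro ⟨d, hd, rfl⟩
      exact ⟨orderEmbOfFin_mem t ht d, (t.orderEmbOfFin ht).lt_iff_lt.mpr hd⟩
  rw [h, card_map, Fin.card_Iio]

lemma orderEmbOfFin_erase (t : Finset β) {n : ℕ} (ht : t.card = n + 1) (c : Fin (n + 1))
    (h : (t.erase (t.orderEmbOfFin ht c)).card = n) (d : Fin n) :
    (t.erase (t.orderEmbOfFin ht c)).orderEmbOfFin h d = t.orderEmbOfFin ht (c.succAbove d) := by
  refine congrFun (orderEmbOfFin_unique h (fun d => mem_erase.mpr ⟨?_, orderEmbOfFin_mem _ _ _⟩)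
    ((t.orderEmbOfFin ht).strictMono.comp (Fin.strictMono_succAbove c))).symm d
  exact fun heq => Fin.succAbove_ne c d ((t.orderEmbOfFin ht).injective heq)

end Finset

lemma Fin.exists_eq_of_injective {n : ℕ} {r : Fin n → ℕ} (hinj : Function.Injective r)
    (hr : ∀ c, r c < n) {j : ℕ} (hj : j < n) : ∃ c, r c = j := by
  have hsurj : Function.Surjective fun c => (⟨r c, hr c⟩ : Fin n) :=
    Finite.injective_iff_surjective.mp fun c c' h => hinj (congrArg Fin.val h)
  obtain ⟨c, hc⟩ := hsurj ⟨j, hj⟩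
  exact ⟨c, congrArg Fin.val hc⟩

lemma finrank_range_lt_finrank_ker {K U V W : Type*} [DivisionRing K] [AddCommGroup U]
    [AddCommGroup V] [AddCommGroup W] [Module K U] [Module K V] [Module K W]
    [FiniteDimensional K V] {f : U →ₗ[K] V} {g : V →ₗ[K] W} (hgf : ∀ x, g (f x) = 0) {z : V}
    (hz : g z = 0) (hzf : z ∉ LinearMap.range f) :
    Module.finrank K (LinearMap.range f) < Module.finrank K (LinearMap.ker g) := by
  refine Submodule.finrank_lt_finrank_of_lt (SetLike.lt_iff_le_and_exists.mpr ⟨?_, z, hz, hzf⟩)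
  rintro _ ⟨x, rfl⟩
  exact hgf x

section SimplexBoundary

variable {R : Type*} [CommRing R] {s : ℕ}

def simplexBd (g : Finset (Fin s) → R) (σ : Finset (Fin s)) : R :=
  ∑ v ∈ σᶜ, (-1) ^ (σ.filter (· < v)).card * g (insert v σ)

def simplexCobd (φ : Finset (Fin s) → R) (τ : Finset (Fin s)) : R :=
  ∑ v ∈ τ, (-1) ^ (τ.filter (· < v)).card * φ (τ.erase v)

lemma simplexBd_simplexBd (g : Finset (Fin s) → R) : simplexBd (simplexBd g) = 0 := by
  funext σ
  simp only [simplexBd, Finset.compl_insert, Finset.mul_sum, Finset.sum_sigma', Pi.zero_apply]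
  refine Finset.sum_involution (fun p _ => ⟨p.2, p.1⟩) ?_ ?_ ?_ (fun _ _ => rfl)
  · rintro ⟨v, w⟩ hp
    simp only [Finset.mem_sigma, Finset.mem_compl, Finset.mem_erase] at hp
    rw [Finset.insert_comm w v, ← mul_assoc, ← mul_assoc,
      Finset.neg_one_pow_card_filter_lt_insert_swap σ hp.1 hp.2.2 (Ne.symm hp.2.1), neg_mul,
      neg_add_cancel]
  · rintro ⟨v, w⟩ hp - h
    simp only [Finset.mem_sigma, Finset.mem_erase] at hp
    exact hp.2.1 (congrArg Sigma.fst h)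
  · rintro ⟨v, w⟩ hp
    simp only [Finset.mem_sigma, Finset.mem_compl, Finset.mem_erase] at hp ⊢
    exact ⟨hp.2.2, Ne.symm hp.2.1, hp.1⟩

lemma sum_mul_simplexBd (φ g : Finset (Fin s) → R) :
    ∑ σ, φ σ * simplexBd g σ = ∑ τ, g τ * simplexCobd φ τ := by
  simp only [simplexBd, simplexCobd, Finset.mul_sum]
  rw [Finset.sum_comm' (t' := Finset.univ)
      (s' := fun v => Finset.univ.filter fun σ : Finset (Fin s) => v ∉ σ) (by simp),
    Finset.sum_comm' (t' := Finset.univ)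
      (s' := fun v => Finset.univ.filter fun τ : Finset (Fin s) => v ∈ τ) (by simp)]
  refine Finset.sum_congr rfl fun v _ => ?_
  refine Finset.sum_nbij' (fun σ => insert v σ) (fun τ => τ.erase v) ?_ ?_ ?_ ?_ ?_ <;>
    simp only [Finset.mem_filter, Finset.mem_univ, true_and, Finset.mem_insert_self,
      Finset.notMem_erase, not_false_eq_true, implies_true]
  · exact fun σ hσ => Finset.erase_insert hσ
  · exact fun τ hτ => Finset.insert_erase hτ
  · intro σ hσ
    rw [Finset.erase_insert hσ, Finset.filter_insert, if_neg (lt_irrefl v)]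
    ring

end SimplexBoundary

section TaylorComplex

variable {𝕜 : Type} [Field 𝕜] {s : ℕ} {P : Finset (Fin s) → Prop} {j : ℕ}

noncomputable def extendChain (f : TaylorChain 𝕜 s P j) (σ : Finset (Fin s)) : 𝕜 :=
  if h : P σ ∧ σ.card = j then f ⟨σ, h⟩ else 0

lemma extendChain_apply (f : TaylorChain 𝕜 s P j)
    (σ : {σ : Finset (Fin s) // P σ ∧ σ.card = j}) : extendChain f σ.1 = f σ :=
  dif_pos σ.2

lemma extendChain_taylorBd (hP : IsLowerSet {σ | P σ}) (f : TaylorChain 𝕜 s P (j + 1)) :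
    extendChain (taylorBd 𝕜 s P j f) = simplexBd (extendChain f) := by
  funext σ
  by_cases hσ : P σ ∧ σ.card = j
  · rw [extendChain, dif_pos hσ, simplexBd, ← Finset.univ_inter σᶜ, ← Finset.sum_ite_mem]
    simp only [taylorBd, LinearMap.coe_mk, AddHom.coe_mk]
    refine Finset.sum_congr rfl fun v _ => ?_
    by_cases hv : v ∈ σ
    · simp [hv]
    · by_cases hPv : P (insert v σ)
      · rw [dif_pos ⟨hv, hPv⟩, if_pos (Finset.mem_compl.mpr hv), extendChain,
          dif_pos ⟨hPv, by rw [Finset.card_insert_of_notMem hv, hσ.2]⟩]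
      · rw [dif_neg fun h => hPv h.2, if_pos (Finset.mem_compl.mpr hv), extendChain,
          dif_neg fun h => hPv h.1, mul_zero]
  · rw [extendChain, dif_neg hσ]
    refine (Finset.sum_eq_zero fun v hv => ?_).symm
    rw [extendChain, dif_neg, mul_zero]
    rintro ⟨hPv, hcard⟩
    rw [Finset.card_insert_of_notMem (Finset.mem_compl.mp hv)] at hcard
    exact hσ ⟨hP (Finset.subset_insert v σ) hPv, by omega⟩

noncomputable def boundaryChain (t : Finset (Fin s)) (j : ℕ) : TaylorChain 𝕜 s P j :=
  fun σ => simplexBd (Pi.single t 1) σ.1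

lemma extendChain_boundaryChain {t : Finset (Fin s)} (ht : t.card = j + 1)
    (hsub : ∀ u ⊂ t, P u) :
    extendChain (boundaryChain (𝕜 := 𝕜) (P := P) t j) = simplexBd (Pi.single t 1) := by
  funext σ
  rw [extendChain]
  split_ifs with h
  · rfl
  refine (Finset.sum_eq_zero fun v hv => ?_).symm
  rw [Pi.single_apply]
  split_ifs with hvt
  · rw [Finset.mem_compl] at hv
    refine absurd ⟨hsub σ ?_, ?_⟩ h
    · rw [← hvt]
      exact Finset.ssubset_insert hv
    · rw [← hvt, Finset.card_insert_of_notMem hv] at ht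
      omega
  · rw [mul_zero]

lemma taylorBd_taylorBd (hP : IsLowerSet {σ | P σ}) (f : TaylorChain 𝕜 s P (j + 2)) :
    taylorBd 𝕜 s P j (taylorBd 𝕜 s P (j + 1) f) = 0 := by
  funext τ
  have h := congrFun (extendChain_taylorBd hP (taylorBd 𝕜 s P (j + 1) f)) τ.1
  rwa [extendChain_apply, extendChain_taylorBd hP, simplexBd_simplexBd] at h

lemma taylorBd_boundaryChain (hP : IsLowerSet {σ | P σ}) {t : Finset (Fin s)}
    (ht : t.card = j + 2) (hsub : ∀ u ⊂ t, P u) :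
    taylorBd 𝕜 s P j (boundaryChain t (j + 1)) = 0 := by
  funext τ
  have h := congrFun (extendChain_taylorBd hP (boundaryChain (𝕜 := 𝕜) t (j + 1))) τ.1
  rwa [extendChain_apply, extendChain_boundaryChain ht hsub, simplexBd_simplexBd] at h

lemma boundaryChain_notMem_range (hP : IsLowerSet {σ | P σ}) {t : Finset (Fin s)}
    (ht : t.card = j + 1) (hsub : ∀ u ⊂ t, P u) (φ : Finset (Fin s) → 𝕜)
    (hφt : simplexCobd φ t ≠ 0) (hφ : ∀ τ, P τ → τ.card = j + 1 → simplexCobd φ τ = 0) :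
    boundaryChain t j ∉ LinearMap.range (taylorBd 𝕜 s P j) := by
  rintro ⟨f, hf⟩
  have hbd := congrArg extendChain hf
  rw [extendChain_taylorBd hP, extendChain_boundaryChain ht hsub] at hbd
  apply hφt
  calc simplexCobd φ t = ∑ τ, (Pi.single t 1 : Finset (Fin s) → 𝕜) τ * simplexCobd φ τ := by
        simp [Pi.single_apply]
    _ = ∑ τ, extendChain f τ * simplexCobd φ τ := by
      rw [← sum_mul_simplexBd, ← sum_mul_simplexBd, hbd]
    _ = 0 := Finset.sum_eq_zero fun τ _ => by
      rw [extendChain]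
      split_ifs with h
      · rw [hφ τ h.1 h.2, mul_zero]
      · rw [zero_mul]

theorem bettiOfTaylor_succ_ne_zero (hP : IsLowerSet {σ | P σ}) {t : Finset (Fin s)}
    (ht : t.card = j + 1) (hsub : ∀ u ⊂ t, P u) (φ : Finset (Fin s) → 𝕜)
    (hφt : simplexCobd φ t ≠ 0) (hφ : ∀ τ, P τ → τ.card = j + 1 → simplexCobd φ τ = 0) :
    bettiOfTaylor 𝕜 s P (j + 1) ≠ 0 := by
  have hz := boundaryChain_notMem_range hP ht hsub φ hφt hφ
  cases j with
  | zero =>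
    refine Nat.sub_ne_zero_of_lt (Submodule.finrank_lt fun htop => hz ?_)
    rw [htop]
    exact Submodule.mem_top
  | succ j =>
    exact Nat.sub_ne_zero_of_lt (finrank_range_lt_finrank_ker (taylorBd_taylorBd hP)
      (taylorBd_boundaryChain hP ht hsub) hz)

end TaylorComplex

section LevelMatrix

variable {R : Type*} [CommRing R]

def levelMatrix {m n : ℕ} (r : Fin n → ℕ) : Matrix (Fin m) (Fin n) R :=
  Matrix.of fun i c => if r c = i then 1 else 0

def augLevelMatrix {n : ℕ} (r : Fin (n + 1) → ℕ) : Matrix (Fin (n + 1)) (Fin (n + 1)) R :=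
  Matrix.of fun i c => Fin.cases 1 (fun i => levelMatrix r i c) i

@[simp]
lemma augLevelMatrix_zero {n : ℕ} (r : Fin (n + 1) → ℕ) (c : Fin (n + 1)) :
    (augLevelMatrix r : Matrix _ _ R) 0 c = 1 :=
  rfl

@[simp]
lemma augLevelMatrix_succ {n : ℕ} (r : Fin (n + 1) → ℕ) (i : Fin n) (c : Fin (n + 1)) :
    (augLevelMatrix r : Matrix _ _ R) i.succ c = if r c = i then 1 else 0 :=
  rfl

lemma det_augLevelMatrix_eq_zero_of_not_injective {n : ℕ} {r : Fin (n + 1) → ℕ}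
    (hr : ¬Function.Injective r) : (augLevelMatrix r : Matrix _ _ R).det = 0 := by
  obtain ⟨c, c', hrc, hne⟩ := Function.not_injective_iff.mp hr
  refine Matrix.det_zero_of_column_eq hne fun i => ?_
  cases i using Fin.cases <;> simp [hrc]

lemma det_augLevelMatrix_ne_zero [Nontrivial R] {n : ℕ} {r : Fin (n + 1) → ℕ}
    (hr : ∀ c, r c ≤ n) (hinj : Function.Injective r) :
    (augLevelMatrix r : Matrix _ _ R).det ≠ 0 := by
  -- Column `c` is column `rot c` of the unitriangular `U`: level `i < n` sits in row `i + 1`,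
  -- level `n` only in the row of ones.
  let rot : Fin (n + 1) → Fin (n + 1) := fun c => finRotate (n + 1) ⟨r c, Nat.lt_succ_of_le (hr c)⟩
  have hrot : Function.Injective rot := fun c c' h =>
    hinj (congrArg Fin.val ((finRotate (n + 1)).injective h))
  let e : Equiv.Perm (Fin (n + 1)) :=
    Equiv.ofBijective rot (Finite.injective_iff_bijective.mp hrot)
  let U : Matrix (Fin (n + 1)) (Fin (n + 1)) R :=
    Matrix.of fun i j => if i = 0 ∨ i = j then 1 else 0
  have hU : U.det = 1 := by
    rw [Matrix.det_of_isUpperTriangular]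
    · simp [U]
    · intro i j hji
      simp only [U, Matrix.of_apply]
      rw [if_neg]
      rintro (rfl | rfl)
      exacts [Fin.not_lt_zero _ hji, lt_irrefl _ hji]
  have hperm : augLevelMatrix r = U.submatrix id e := by
    ext i c
    cases i using Fin.cases with
    | zero => simp [U]
    | succ i =>
      simp only [augLevelMatrix_succ, U, Matrix.of_apply, Matrix.submatrix_apply, id,
        Fin.succ_ne_zero, false_or, e, Equiv.ofBijective_apply, rot]
      simp only [Fin.ext_iff, coe_finRotate, Fin.val_succ, Fin.val_last]
      have hc := hr c
      have hi := i.isLt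
      split_ifs <;> first | rfl | (exfalso; omega)
  rw [hperm, Matrix.det_permute', hU, mul_one]
  rcases Int.units_eq_one_or (Equiv.Perm.sign e) with h | h <;> simp [h]

lemma det_augLevelMatrix_eq_sum {n : ℕ} (r : Fin (n + 1) → ℕ) :
    (augLevelMatrix r : Matrix _ _ R).det
      = ∑ c : Fin (n + 1),
          (-1) ^ (c : ℕ) * (levelMatrix (r ∘ c.succAbove) : Matrix _ _ R).det := by
  rw [Matrix.det_succ_row_zero]
  refine Finset.sum_congr rfl fun c _ => ?_
  simp [levelMatrix, Matrix.submatrix]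

end LevelMatrix

section LevelCochain

variable {R : Type*} [CommRing R] {s : ℕ}

noncomputable def levelCochain (ρ : Fin s → ℕ) (σ : Finset (Fin s)) : R :=
  (levelMatrix fun c => ρ (σ.orderEmbOfFin rfl c)).det

lemma levelCochain_eq (ρ : Fin s → ℕ) {σ : Finset (Fin s)} {n : ℕ} (h : σ.card = n) :
    (levelCochain ρ σ : R) = (levelMatrix fun c => ρ (σ.orderEmbOfFin h c)).det := by
  subst h
  rfl

lemma simplexCobd_levelCochain (ρ : Fin s → ℕ) {t : Finset (Fin s)} {n : ℕ}
    (ht : t.card = n + 1) :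
    simplexCobd (levelCochain ρ) t
      = (augLevelMatrix fun c => ρ (t.orderEmbOfFin ht c) : Matrix _ _ R).det := by
  have hsum (f : Fin s → R) : ∑ v ∈ t, f v = ∑ c, f (t.orderEmbOfFin ht c) := by
    conv_lhs => rw [← t.map_orderEmbOfFin_univ ht, Finset.sum_map]
    rfl
  rw [det_augLevelMatrix_eq_sum, simplexCobd, hsum]
  refine Finset.sum_congr rfl fun c _ => ?_
  have hcard : (t.erase (t.orderEmbOfFin ht c)).card = n := by
    rw [Finset.card_erase_of_mem (t.orderEmbOfFin_mem ht c), ht, Nat.add_sub_cancel]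
  rw [Finset.card_filter_lt_orderEmbOfFin, levelCochain_eq ρ hcard]
  simp only [Finset.orderEmbOfFin_erase t ht c hcard]
  rfl

end LevelCochain

lemma listUnion_eq_sup_toFinset (L : List (Finset α)) : listUnion L = L.toFinset.sup id := by
  induction L with
  | nil => rfl
  | cons F L ih => rw [List.toFinset_cons, Finset.sup_insert, ← ih]; rfl

lemma listUnion_subset_of_forall_getElem_subset {L : List (Finset α)} {S : Finset α}
    (h : ∀ j (hj : j < L.length), L[j] ⊆ S ∪ listUnion (L.drop (j + 1))) :
    listUnion L ⊆ S := by
  induction L with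
  | nil => exact Finset.empty_subset S
  | cons F L ih =>
    have htail : listUnion L ⊆ S := ih fun j hj => h (j + 1) (by simpa using hj)
    exact Finset.union_subset
      ((h 0 (by simp)).trans (Finset.union_subset subset_rfl htail)) htail

lemma IsFacetCover.sup_id_eq {Γ D : Finset (Finset α)} {V : Finset α}
    (hD : IsFacetCover V (inducedSub Γ V) D) : D.sup id = V := by
  refine subset_antisymm (Finset.sup_le fun F hF => (Finset.mem_filter.mp (hD.1 hF)).2) ?_
  intro x hx
  obtain ⟨F, hF, hxF⟩ := hD.2 x hx
  exact Finset.mem_sup.mpr ⟨F, hF, hxF⟩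

lemma IsMinimalFacetCover.sup_id_ssubset {Γ D D' : Finset (Finset α)} {V : Finset α}
    (hD : IsMinimalFacetCover V (inducedSub Γ V) D) (hD' : D' ⊂ D) : D'.sup id ⊂ V := by
  rw [← hD.1.sup_id_eq]
  refine (Finset.sup_mono hD'.subset).ssubset_of_ne fun heq =>
    hD.2 D' hD' ⟨hD'.subset.trans hD.1.1, ?_⟩
  intro x hx
  rw [← hD.1.sup_id_eq, ← heq] at hx
  obtain ⟨F, hF, hxF⟩ := Finset.mem_sup.mp hx
  exact ⟨F, hF, hxF⟩

lemma IsWellOrderedFacetCover.exists_level {V : Finset α} {Δ : Finset (Finset α)}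
    {L : List (Finset α)} (hL : IsWellOrderedFacetCover V Δ L) :
    ∃ ℓ : Finset α → ℕ,
      (∀ H ∈ Δ, ∃ h : ℓ H < L.length, L[ℓ H] ⊆ H ∪ listUnion (L.drop (ℓ H + 1))) ∧
      ∀ H ∈ L, ∃ h : ℓ H < L.length, L[ℓ H] = H := by
  have (H : Finset α) : ∃ i, (H ∈ Δ → ∃ h : i < L.length,
      L[i] ⊆ H ∪ listUnion (L.drop (i + 1))) ∧ (H ∈ L → ∃ h : i < L.length, L[i] = H) := by
    by_cases hHL : H ∈ L
    · obtain ⟨i, hi, rfl⟩ := List.mem_iff_getElem.mp hHL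
      exact ⟨i, fun _ => ⟨hi, Finset.subset_union_left⟩, fun _ => ⟨hi, rfl⟩⟩
    by_cases hHΔ : H ∈ Δ
    · obtain ⟨i, hi, hsub⟩ := hL.2.2.2 H hHΔ hHL
      exact ⟨i, fun _ => ⟨by omega, by simpa using hsub⟩, fun h => absurd h hHL⟩
    · exact ⟨0, fun h => absurd h hHΔ, fun h => absurd h hHL⟩
  choose ℓ hℓ using this
  exact ⟨ℓ, fun H hH => (hℓ H).1 hH, fun H hH => (hℓ H).2 hH⟩

section FacetLevels

variable {R : Type*} [CommRing R] {s n : ℕ}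

lemma simplexCobd_levelCochain_eq_zero {gen : Fin s → Finset α} {ℓ : Finset α → ℕ}
    {L : List (Finset α)} {Δ : Finset (Finset α)}
    (hℓ : ∀ H ∈ Δ, ∃ h : ℓ H < L.length, L[ℓ H] ⊆ H ∪ listUnion (L.drop (ℓ H + 1)))
    (hL : L.length = n + 1) {τ : Finset (Fin s)} (hτ : τ.card = n + 1)
    (hτΔ : ∀ v ∈ τ, gen v ∈ Δ) (hcov : ¬listUnion L ⊆ τ.sup gen) :
    simplexCobd (levelCochain (ℓ ∘ gen)) τ = (0 : R) := by
  rw [simplexCobd_levelCochain _ hτ]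
  by_contra hdet
  have hinj := not_imp_comm.mp det_augLevelMatrix_eq_zero_of_not_injective hdet
  have hmem (c : Fin (n + 1)) := hℓ _ (hτΔ _ (τ.orderEmbOfFin_mem hτ c))
  refine hcov (listUnion_subset_of_forall_getElem_subset fun j hj => ?_)
  obtain ⟨c, rfl⟩ :=
    Fin.exists_eq_of_injective hinj (fun c => (hmem c).1.trans_eq hL) (hj.trans_eq hL)
  exact (hmem c).2.trans (Finset.union_subset_union_left
    (Finset.le_sup (f := gen) (τ.orderEmbOfFin_mem hτ c)))

lemma simplexCobd_levelCochain_ne_zero [Nontrivial R] {β : Type*} {gen : Fin s → β}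
    {ℓ : β → ℕ} {L : List β} (hgen : Function.Injective gen)
    (hℓ : ∀ H ∈ L, ∃ h : ℓ H < L.length, L[ℓ H] = H) (hL : L.length = n + 1)
    {t : Finset (Fin s)} (ht : t.card = n + 1) (htL : ∀ v ∈ t, gen v ∈ L) :
    simplexCobd (levelCochain (ℓ ∘ gen)) t ≠ (0 : R) := by
  rw [simplexCobd_levelCochain _ ht]
  have hmem (c : Fin (n + 1)) := hℓ _ (htL _ (t.orderEmbOfFin_mem ht c))
  refine det_augLevelMatrix_ne_zero (fun c => Nat.le_of_lt_succ ((hmem c).1.trans_eq hL))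
    fun c c' hcc' => (t.orderEmbOfFin ht).injective (hgen ?_)
  rw [← (hmem c).2, ← (hmem c').2]
  simp only [Function.comp_apply] at hcc'
  simp only [hcc']

end FacetLevels

lemma isLowerSet_sup_ssubset {ι β : Type*} [DecidableEq β] (gen : ι → Finset β) (m : Finset β) :
    IsLowerSet {σ : Finset ι | σ.sup gen ⊂ m} :=
  fun _ _ hle hσ => Finset.ssubset_of_subset_of_ssubset (Finset.sup_mono hle) hσ

noncomputable def facetGen {β : Type*} (Γ : Finset (Finset β)) (v : Fin Γ.card) : Finset β :=
  Γ.equivFin.symm v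

lemma facetBetti_eq (k : Type) [Field k] (Γ : Finset (Finset α)) (i : ℕ) (m : Finset α) :
    facetBetti k Γ i m = if ∃ σ : Finset (Fin Γ.card), σ.sup (facetGen Γ) = m then
      bettiOfTaylor k Γ.card (fun σ => σ.sup (facetGen Γ) ⊂ m) i else 0 :=
  rfl

lemma facetGen_injective {β : Type*} (Γ : Finset (Finset β)) : Function.Injective (facetGen Γ) :=
  fun _ _ h => Γ.equivFin.symm.injective (Subtype.ext h)

lemma facetGen_mem {β : Type*} (Γ : Finset (Finset β)) (v : Fin Γ.card) : facetGen Γ v ∈ Γ :=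
  (Γ.equivFin.symm v).2

lemma exists_facetGen_eq {β : Type*} {Γ : Finset (Finset β)} {F : Finset β} (hF : F ∈ Γ) :
    ∃ v, facetGen Γ v = F :=
  ⟨Γ.equivFin ⟨F, hF⟩, by simp [facetGen]⟩

lemma IsMinimalFacetCover.exists_taylorFace {Γ : Finset (Finset α)} {m : Finset α}
    {L : List (Finset α)} (hnodup : L.Nodup)
    (hL : IsMinimalFacetCover m (inducedSub Γ m) L.toFinset) :
    ∃ σ : Finset (Fin Γ.card), σ.card = L.length ∧ (∀ v ∈ σ, facetGen Γ v ∈ L) ∧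
      σ.sup (facetGen Γ) = m ∧ ∀ u ⊂ σ, u.sup (facetGen Γ) ⊂ m := by
  set σ := Finset.univ.filter fun v => facetGen Γ v ∈ L
  have himage : σ.image (facetGen Γ) = L.toFinset := by
    ext F
    simp only [Finset.mem_image, Finset.mem_filter, Finset.mem_univ, true_and, List.mem_toFinset,
      σ]
    refine ⟨fun ⟨v, hv, hvF⟩ => hvF ▸ hv, fun hF => ?_⟩
    obtain ⟨v, rfl⟩ :=
      exists_facetGen_eq (Finset.mem_filter.mp (hL.1.1 (List.mem_toFinset.mpr hF))).1
    exact ⟨v, hF, rfl⟩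
  have hsup (u : Finset (Fin Γ.card)) : u.sup (facetGen Γ) = (u.image (facetGen Γ)).sup id := by
    rw [Finset.sup_image]
    rfl
  refine ⟨σ, ?_, fun v hv => (Finset.mem_filter.mp hv).2, ?_, fun u hu => ?_⟩
  · rw [← List.toFinset_card_of_nodup hnodup, ← himage,
      Finset.card_image_of_injective _ (facetGen_injective Γ)]
  · rw [hsup, himage, hL.1.sup_id_eq]
  · rw [hsup]
    exact hL.sup_id_ssubset
      (himage ▸ (Finset.image_ssubset_image (facetGen_injective Γ)).mpr hu)

theorem wellOrderedFacetCover_gives_nonzero_betti_general (k : Type) [Field k]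
    (Γ : Finset (Finset α)) (m : Finset α) (L : List (Finset α))
    (hL : IsWellOrderedFacetCover m (inducedSub Γ m) L) :
    facetBetti k Γ L.length m ≠ 0 := by
  obtain ⟨ℓ, hℓΔ, hℓL⟩ := hL.exists_level
  obtain ⟨σ, hcard, hσL, hsup, hproper⟩ := hL.2.2.1.exists_taylorFace hL.1
  have hcover : listUnion L = m := by
    rw [listUnion_eq_sup_toFinset, hL.2.2.1.1.sup_id_eq]
  rw [facetBetti_eq, if_pos ⟨σ, hsup⟩]
  rcases hlen : L.length with _ | n
  · have hm : m = ∅ := by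
      rw [← hsup, Finset.card_eq_zero.mp (hcard.trans hlen), Finset.sup_empty,
        Finset.bot_eq_empty]
    simp [bettiOfTaylor, hm]
  refine bettiOfTaylor_succ_ne_zero (isLowerSet_sup_ssubset _ m) (hcard.trans hlen) hproper
    (levelCochain (ℓ ∘ facetGen Γ)) ?_ fun τ hτ hτcard => ?_
  · exact simplexCobd_levelCochain_ne_zero (facetGen_injective Γ) hℓL hlen (hcard.trans hlen)
      hσL
  · refine simplexCobd_levelCochain_eq_zero hℓΔ hlen hτcard (fun v hv => ?_) ?_
    · exact Finset.mem_filter.mpr ⟨facetGen_mem Γ v, (Finset.le_sup hv).trans hτ.subset⟩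
    · rw [hcover]
      exact not_subset_of_ssuperset hτ

/-- If the induced subcollection `Γ_m` of a simplicial complex `Γ` (the facets of `Γ`
contained in the squarefree multidegree `m`, as a complex with vertex set `m`) has a well
ordered facet cover of cardinality `i`, then `b_{i,m}(S/F(Γ)) ≠ 0`. -/
theorem wellOrderedFacetCover_gives_nonzero_betti (k : Type) [Field k]
    (Γ : Finset (Finset α)) (hfacets : ∀ F ∈ Γ, ∀ G ∈ Γ, F ⊆ G → F = G)
    (hne : ∀ F ∈ Γ, F.Nonempty)
    (m : Finset α) (L : List (Finset α))
    (hL : IsWellOrderedFacetCover m (inducedSub Γ m) L) :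
    facetBetti k Γ L.length m ≠ 0 :=
  wellOrderedFacetCover_gives_nonzero_betti_general k Γ m L hL
end

section
/- Let Γ be a simplicial complex with connected components Υ_1, ..., Υ_k. If each Υ_t has a well ordered facet cover of cardinality u_t, then Γ has a well ordered facet cover of cardinality u_1 + ... + u_k, obtained by concatenating the covers of the components. -/
open Classical

variable {α : Type*} [DecidableEq α]

/-- A subcollection is connected if any two of its facets are joined by a chain of facets
with consecutive nonempty intersections. -/
def IsConnectedCollection (Δ : Finset (Finset α)) : Prop :=
  ∀ F ∈ Δ, ∀ G ∈ Δ,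
    Relation.ReflTransGen (fun A B => A ∈ Δ ∧ B ∈ Δ ∧ (A ∩ B).Nonempty) F G

/-! Components have pairwise disjoint vertex sets, so a family of facets taken from the
concatenated covers covers `V(Γ)` exactly when its trace on each component covers that
component; a proper subfamily covering `V(Γ)` would thus give a proper subcover of some
component, and minimality is inherited. A facet `H` outside the concatenation lies in a single
component, whose cover supplies an index `i` with `F_i ⊆ H ∪ F_{i+1} ∪ ⋯`; in the concatenation
`F_i` is followed by all of its old successors (and possibly more), so the inclusion persists. -/

open Finset Function

lemma mem_vertexSet {Δ : Finset (Finset α)} {v : α} :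
    v ∈ vertexSet Δ ↔ ∃ F ∈ Δ, v ∈ F := Finset.mem_sup

lemma listUnion_append (K M : List (Finset α)) :
    listUnion (K ++ M) = listUnion K ∪ listUnion M := by
  induction K with
  | nil => simp [listUnion]
  | cons F K ih =>
    simp only [listUnion, List.cons_append, List.foldr_cons] at ih ⊢
    rw [ih, union_assoc]

def IsWellOrderedAt (L : List (Finset α)) (H : Finset α) : Prop :=
  ∃ i : ℕ, ∃ h : i + 1 < L.length,
    L.get ⟨i, Nat.lt_of_succ_lt h⟩ ⊆ H ∪ listUnion (L.drop (i + 1))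

namespace IsWellOrderedAt

variable {L : List (Finset α)} {H : Finset α}

lemma append_right (h : IsWellOrderedAt L H) (M : List (Finset α)) :
    IsWellOrderedAt (L ++ M) H := by
  obtain ⟨i, hi, hsub⟩ := h
  refine ⟨i, by simp; omega, ?_⟩
  simp only [List.get_eq_getElem] at hsub ⊢
  rw [List.getElem_append_left (Nat.lt_of_succ_lt hi), List.drop_append_of_le_length hi.le,
    listUnion_append, ← union_assoc]
  exact hsub.trans subset_union_left

lemma append_left (h : IsWellOrderedAt L H) (K : List (Finset α)) :
    IsWellOrderedAt (K ++ L) H := by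
  obtain ⟨i, hi, hsub⟩ := h
  refine ⟨K.length + i, by simp; omega, ?_⟩
  simpa [Nat.add_assoc, List.drop_length_add_append, List.getElem_append_right] using hsub

lemma flatten {LL : List (List (Finset α))} (h : IsWellOrderedAt L H) (hL : L ∈ LL) :
    IsWellOrderedAt LL.flatten H := by
  obtain ⟨K, M, rfl⟩ := List.append_of_mem hL
  rw [List.flatten_append, List.flatten_cons]
  exact (h.append_right _).append_left _

end IsWellOrderedAt

lemma List.mem_flatten_ofFn {β : Type*} {n : ℕ} {L : Fin n → List β} {b : β} :
    b ∈ (List.ofFn L).flatten ↔ ∃ t, b ∈ L t := by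
  simp [List.mem_flatten, List.mem_ofFn]

lemma List.nodup_flatten_ofFn {β : Type*} {n : ℕ} {L : Fin n → List β}
    (hnodup : ∀ t, (L t).Nodup) (hdisj : _root_.Pairwise (List.Disjoint on L)) :
    (List.ofFn L).flatten.Nodup :=
  List.nodup_flatten.2 ⟨by simpa [List.mem_ofFn] using hnodup,
    List.pairwise_ofFn.2 fun _ _ hij => hdisj hij.ne⟩

lemma List.length_flatten_ofFn {β : Type*} {n : ℕ} (L : Fin n → List β) :
    (List.ofFn L).flatten.length = ∑ t, (L t).length := by
  simp [List.length_flatten, List.sum_ofFn]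

lemma List.toFinset_flatten_ofFn {β : Type*} [DecidableEq β] {n : ℕ} (L : Fin n → List β) :
    (List.ofFn L).flatten.toFinset = univ.biUnion fun t => (L t).toFinset := by
  ext; simp

section Components

variable {ι : Type*} {Γ : Finset (Finset α)} {Δ D : ι → Finset (Finset α)}

lemma eq_of_mem_of_mem_vertexSet (hdisj : Pairwise (Disjoint on fun t => vertexSet (Δ t)))
    {t t' : ι} {F : Finset α} {v : α} (hF : F ∈ Δ t) (hvF : v ∈ F)
    (hv : v ∈ vertexSet (Δ t')) : t = t' := by
  by_contra hne
  exact Finset.disjoint_left.1 (hdisj hne) (mem_vertexSet.2 ⟨F, hF, hvF⟩) hv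

lemma isFacetCover_biUnion [Fintype ι] (hΔ : ∀ t, Δ t ⊆ Γ)
    (hcover : ∀ H ∈ Γ, ∃ t, H ∈ Δ t)
    (hD : ∀ t, IsFacetCover (vertexSet (Δ t)) (Δ t) (D t)) :
    IsFacetCover (vertexSet Γ) Γ (univ.biUnion D) := by
  refine ⟨fun F hF => ?_, fun v hv => ?_⟩
  · obtain ⟨t, -, hFt⟩ := mem_biUnion.1 hF
    exact hΔ t ((hD t).1 hFt)
  · obtain ⟨H, hH, hvH⟩ := mem_vertexSet.1 hv
    obtain ⟨t, hHt⟩ := hcover H hH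
    obtain ⟨F, hF, hvF⟩ := (hD t).2 v (mem_vertexSet.2 ⟨H, hHt, hvH⟩)
    exact ⟨F, mem_biUnion.2 ⟨t, mem_univ t, hF⟩, hvF⟩

lemma IsFacetCover.inter_of_subset_biUnion [Fintype ι]
    (hdisj : Pairwise (Disjoint on fun t => vertexSet (Δ t))) (hΔ : ∀ t, Δ t ⊆ Γ)
    (hD : ∀ t, D t ⊆ Δ t) {D' : Finset (Finset α)} (hD' : D' ⊆ univ.biUnion D)
    (hcov : IsFacetCover (vertexSet Γ) Γ D') (t : ι) :
    IsFacetCover (vertexSet (Δ t)) (Δ t) (D' ∩ D t) := by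
  refine ⟨inter_subset_right.trans (hD t), fun v hv => ?_⟩
  have hvΓ : v ∈ vertexSet Γ := (sup_mono (hΔ t) : vertexSet (Δ t) ⊆ vertexSet Γ) hv
  obtain ⟨F, hF, hvF⟩ := hcov.2 v hvΓ
  obtain ⟨t', -, hFt'⟩ := mem_biUnion.1 (hD' hF)
  obtain rfl := eq_of_mem_of_mem_vertexSet hdisj (hD t' hFt') hvF hv
  exact ⟨F, mem_inter.2 ⟨hF, hFt'⟩, hvF⟩

lemma isMinimalFacetCover_biUnion [Fintype ι]
    (hdisj : Pairwise (Disjoint on fun t => vertexSet (Δ t))) (hΔ : ∀ t, Δ t ⊆ Γ)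
    (hcover : ∀ H ∈ Γ, ∃ t, H ∈ Δ t)
    (hD : ∀ t, IsMinimalFacetCover (vertexSet (Δ t)) (Δ t) (D t)) :
    IsMinimalFacetCover (vertexSet Γ) Γ (univ.biUnion D) := by
  refine ⟨isFacetCover_biUnion hΔ hcover fun t => (hD t).1, fun D' hD' hcov => ?_⟩
  obtain ⟨F, hF, hFD'⟩ := exists_of_ssubset hD'
  obtain ⟨t, -, hFt⟩ := mem_biUnion.1 hF
  have hssub : D' ∩ D t ⊂ D t :=
    ssubset_iff_of_subset inter_subset_right |>.2 ⟨F, hFt, fun h => hFD' (mem_inter.1 h).1⟩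
  exact (hD t).2 _ hssub <|
    hcov.inter_of_subset_biUnion hdisj hΔ (fun t => (hD t).1.1) hD'.subset t

end Components

theorem components_concat_wellOrderedFacetCover_general (Γ : Finset (Finset α))
    (q : ℕ) (Υ : Fin q → Finset (Finset α))
    (hsub : ∀ t, Υ t ⊆ Γ)
    (hpart : ∀ H ∈ Γ, ∃! t, H ∈ Υ t)
    (hdisj : ∀ t t', t ≠ t' → Disjoint (vertexSet (Υ t)) (vertexSet (Υ t')))
    (L : Fin q → List (Finset α))
    (hL : ∀ t, IsWellOrderedFacetCover (vertexSet (Υ t)) (Υ t) (L t)) :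
    IsWellOrderedFacetCover (vertexSet Γ) Γ (List.ofFn L).flatten ∧
      (List.ofFn L).flatten.length = ∑ t, (L t).length := by
  have hcomp {t t' : Fin q} {F : Finset α} (h : F ∈ Υ t) (h' : F ∈ Υ t') : t = t' :=
    (hpart F (hsub t h)).unique h h'
  have hmem : ∀ F ∈ (List.ofFn L).flatten, F ∈ Γ := by
    intro F hF
    obtain ⟨t, hFt⟩ := List.mem_flatten_ofFn.1 hF
    exact hsub t ((hL t).2.1 F hFt)
  have hnodup : (List.ofFn L).flatten.Nodup :=
    List.nodup_flatten_ofFn (fun t => (hL t).1) fun t t' hne F hF hF' =>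
      hne (hcomp ((hL t).2.1 F hF) ((hL t').2.1 F hF'))
  have hminimal : IsMinimalFacetCover (vertexSet Γ) Γ (List.ofFn L).flatten.toFinset := by
    rw [List.toFinset_flatten_ofFn]
    exact isMinimalFacetCover_biUnion hdisj hsub
      (fun H hH => (hpart H hH).exists) fun t => (hL t).2.2.1
  have hwellOrdered (H : Finset α) (hH : H ∈ Γ) (hHL : H ∉ (List.ofFn L).flatten) :
      IsWellOrderedAt (List.ofFn L).flatten H := by
    obtain ⟨t, hHt, -⟩ := hpart H hH
    have hHLt : H ∉ L t := fun h => hHL (List.mem_flatten_ofFn.2 ⟨t, h⟩)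
    exact IsWellOrderedAt.flatten ((hL t).2.2.2 H hHt hHLt) (List.mem_ofFn.2 ⟨t, rfl⟩)
  exact ⟨⟨hnodup, hmem, hminimal, hwellOrdered⟩, List.length_flatten_ofFn L⟩

/-- If `Υ 0, ..., Υ (q-1)` are the connected components of the simplicial complex `Γ`
(connected subcollections, partitioning the facets, with pairwise disjoint vertex sets)
and each `Υ t` has a well ordered facet cover `L t` (of cardinality `u t`), then the
concatenation of the `L t` is a well ordered facet cover of `Γ` (of cardinality
`u 0 + ⋯ + u (q-1)`). -/
theorem components_concat_wellOrderedFacetCover (Γ : Finset (Finset α))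
    (hfacets : ∀ F ∈ Γ, ∀ G ∈ Γ, F ⊆ G → F = G)
    (hne : ∀ F ∈ Γ, F.Nonempty)
    (q : ℕ) (Υ : Fin q → Finset (Finset α))
    (hsub : ∀ t, Υ t ⊆ Γ)
    (hconn : ∀ t, IsConnectedCollection (Υ t))
    (hpart : ∀ H ∈ Γ, ∃! t, H ∈ Υ t)
    (hdisj : ∀ t t', t ≠ t' → Disjoint (vertexSet (Υ t)) (vertexSet (Υ t')))
    (L : Fin q → List (Finset α))
    (hL : ∀ t, IsWellOrderedFacetCover (vertexSet (Υ t)) (Υ t) (L t)) :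
    IsWellOrderedFacetCover (vertexSet Γ) Γ (List.ofFn L).flatten ∧
      (List.ofFn L).flatten.length = ∑ t, (L t).length :=
  components_concat_wellOrderedFacetCover_general Γ q Υ hsub hpart hdisj L hL
end
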